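/- Let q ≥ 2 and n ≥ 1. For every partition λ of n, Q_{n,q}(λ) ≤ (1 - 1/q)^{1 - 4√(2n)} · P_{n,q}(λ), i.e., Q_{n,q}(λ) ≤ P_{n,q}(λ) / (1 - 1/q)^{-1 + 4√(2n)}. -/

import Mathlib

open Finset

noncomputable section

/-- The q-Pochhammer-type product `(1/q)_m = ∏_{k=1}^m (1 - 1/q^k)`. -/
def qPoch (q : ℝ) (m : ℕ) : ℝ := ∏ k ∈ Finset.Icc 1 m, (1 - 1/q^k)

/-- `conjPart l j = λ'_j`, the `j`-th part of the conjugate partition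
(the number of parts of `l` that are at least `j`). -/
def conjPart {n : ℕ} (l : n.Partition) (j : ℕ) : ℕ :=
  Multiset.countP (fun p => j ≤ p) l.parts

/-- `rowLen l i = λ_i`, the `i`-th largest part of `l` (1-indexed, `0` if `i` exceeds
the number of parts). -/
def rowLen {n : ℕ} (l : n.Partition) (i : ℕ) : ℕ :=
  ((Finset.Icc 1 n).filter (fun j => i ≤ conjPart l j)).card

/-- The Young diagram of `l`, as the set of cells `(i,j)` (row `i`, column `j`,
both 1-indexed) with `1 ≤ j ≤ λ_i`. -/
def cells {n : ℕ} (l : n.Partition) : Finset (ℕ × ℕ) :=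
  (Finset.Icc 1 n ×ˢ Finset.Icc 1 n).filter (fun s => s.2 ≤ rowLen l s.1)

/-- The arm length `a(s) = λ_i - j` of the cell `s = (i,j)`. -/
def arm {n : ℕ} (l : n.Partition) (s : ℕ × ℕ) : ℕ := rowLen l s.1 - s.2

/-- The leg length `l(s) = λ'_j - i` of the cell `s = (i,j)`. -/
def leg {n : ℕ} (l : n.Partition) (s : ℕ × ℕ) : ℕ := conjPart l s.2 - s.1

/-- The hook length `h(s) = a(s) + l(s) + 1` of the cell `s`. -/
def hookLen {n : ℕ} (l : n.Partition) (s : ℕ × ℕ) : ℕ := arm l s + leg l s + 1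

/-- `n(λ) = ∑_i (i-1) λ_i`. -/
def nStat {n : ℕ} (l : n.Partition) : ℕ := ∑ i ∈ Finset.Icc 1 n, (i - 1) * rowLen l i

/-- The multiplicity `m_j(λ)` of `j` as a part of `l`. -/
def mult {n : ℕ} (l : n.Partition) (j : ℕ) : ℕ := Multiset.count j l.parts

/-- The denominator `∏_j q^{(λ'_j)^2} (1/q)_{m_j(λ)}` appearing in the measure `P_{n,q}`. -/
def Pden (q : ℝ) {n : ℕ} (l : n.Partition) : ℝ :=
  ∏ j ∈ Finset.Icc 1 n, q ^ ((conjPart l j)^2) * qPoch q (mult l j)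

/-- The measure `P_{n,q}(λ) = q^n (1/q)_n / ∏_j q^{(λ'_j)^2} (1/q)_{m_j(λ)}`. -/
def Pmeas (q : ℝ) {n : ℕ} (l : n.Partition) : ℝ := q^n * qPoch q n / Pden q l

/-- `z(n,q)`: the coefficient of `u^n` in the formal expansion of
`∏_{i≥1} ∏_{j≥0} 1/(1 - u/q^{i+j})`, obtained by expanding each factor
as a geometric series and collecting terms of total degree `n`. -/
def zCoeff (n : ℕ) (q : ℝ) : ℝ :=
  ∑' f : {f : (ℕ × ℕ) →₀ ℕ // (f.sum fun _ k => k) = n},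
    ∏ p ∈ (f : (ℕ × ℕ) →₀ ℕ).support,
      ((1 : ℝ) / q ^ ((p.1 + 1) + p.2)) ^ ((f : (ℕ × ℕ) →₀ ℕ) p)

/-- The measure `Q_{n,q}(λ) = (1/z(n,q)) / (q^{|λ|+2n(λ)} ∏_{s∈λ} (1-1/q^{h(s)})^2)`. -/
def Qmeas (q : ℝ) {n : ℕ} (l : n.Partition) : ℝ :=
  (1 / zCoeff n q) *
    (1 / (q ^ (n + 2 * nStat l) * ∏ s ∈ cells l, (1 - 1/q^(hookLen l s))^2))

/-- `P_{n,q}^r`: the `P_{n,q}`-probability that the largest part of `λ` is `< r`. -/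
def Ptail (n : ℕ) (q : ℝ) (r : ℕ) : ℝ :=
  ∑ l ∈ Finset.univ.filter (fun l : n.Partition => ∀ p ∈ l.parts, p < r), Pmeas q l

end

/-!
Put `x = 1 / q ≤ 1 / 2`. Since `∑ⱼ (λ'ⱼ)² = n + 2 n(λ)`, the powers of `q` cancel in
`Q(λ) / P(λ) = A / (z q^n (1/q)_n B²)`, where `A = ∏ⱼ (1/q)_{mⱼ}` and
`B = ∏ₛ (1 - x^{h(s)})`.
Three terms of the series give `z ≥ q^{-n} (1 + 2x) ≥ q^{-n} / (1 - x)`; `A ≤ 1 - x` because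
`λ` has a part; and `(1/q)_m ≥ (1 - x)²` for every `m`. Hence `Q / P ≤ 1 / B²`.
Two cells with the same hook length can be neither in the same row nor in the same column,
so if there are `r` of them, their column indices are `r` distinct positive integers of sum at
most `n`: `r (r + 1) ≤ 2n`, i.e. `r ≤ √(2n) - 1/4`. Grouping the factors of `B` by hook length
gives `B ≥ ((1/q)_{2n+1})^r ≥ (1 - x)^{2√(2n) - 1/2}`.
-/

section ProductBounds

variable {R : Type*} [CommRing R] [LinearOrder R] [IsStrictOrderedRing R]

lemma one_sub_sum_le_prod_one_sub {ι : Type*} (s : Finset ι) {f : ι → R}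
    (h0 : ∀ i ∈ s, 0 ≤ f i) (h1 : ∀ i ∈ s, f i ≤ 1) :
    1 - ∑ i ∈ s, f i ≤ ∏ i ∈ s, (1 - f i) := by
  classical
  induction s using Finset.induction_on with
  | empty => simp
  | insert a s ha ih =>
    rw [sum_insert ha, prod_insert ha]
    have ih := ih (fun i hi => h0 i (mem_insert_of_mem hi)) fun i hi => h1 i (mem_insert_of_mem hi)
    have hs : 0 ≤ ∑ i ∈ s, f i := sum_nonneg fun i hi => h0 i (mem_insert_of_mem hi)
    nlinarith [h0 a (mem_insert_self a s), h1 a (mem_insert_self a s)]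

lemma pow_prod_le_prod_comp_of_card_fiber_le {ι κ : Type*} [DecidableEq κ] {s : Finset ι}
    {t : Finset κ} {g : ι → κ} {f : κ → R} {K : ℕ} (hg : ∀ i ∈ s, g i ∈ t)
    (hf0 : ∀ k ∈ t, 0 ≤ f k) (hf1 : ∀ k ∈ t, f k ≤ 1) (hK : ∀ k ∈ t, #{i ∈ s | g i = k} ≤ K) :
    (∏ k ∈ t, f k) ^ K ≤ ∏ i ∈ s, f (g i) := by
  rw [← prod_fiberwise_of_maps_to hg, ← prod_pow]
  refine prod_le_prod (fun k hk => pow_nonneg (hf0 k hk) K) fun k hk => ?_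
  rw [prod_congr rfl fun i hi => by rw [(mem_filter.1 hi).2], prod_const]
  exact pow_le_pow_of_le_one (hf0 k hk) (hf1 k hk) (hK k hk)

end ProductBounds

lemma one_sub_sq_le_prod_one_sub_pow {x : ℝ} (hx0 : 0 ≤ x) (hx : x ≤ 1 / 2) (m : ℕ) :
    (1 - x) ^ 2 ≤ ∏ k ∈ Icc 1 m, (1 - x ^ k) := by
  rcases Nat.eq_zero_or_pos m with rfl | hm
  · simp only [Icc_eq_empty_of_lt zero_lt_one, prod_empty]
    nlinarith
  have hpow_le_one : ∀ k ∈ Icc 2 m, x ^ k ≤ 1 := fun k _ => pow_le_one₀ hx0 (by linarith)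
  have htail : ∑ k ∈ Icc 2 m, x ^ k ≤ x := calc
    ∑ k ∈ Icc 2 m, x ^ k = ∑ k ∈ Ico 2 (m + 1), x ^ k := by rw [Ico_add_one_right_eq_Icc]
    _ ≤ x ^ 2 / (1 - x) := geom_sum_Ico_le_of_lt_one hx0 (by linarith)
    _ ≤ x := by rw [div_le_iff₀ (by linarith)]; nlinarith
  rw [← insert_Icc_add_one_left_eq_Icc hm, prod_insert (by simp), pow_one, sq, one_add_one_eq_two]
  refine mul_le_mul_of_nonneg_left ?_ (by linarith)
  linarith [one_sub_sum_le_prod_one_sub (Icc 2 m) (fun k _ => pow_nonneg hx0 k) hpow_le_one]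

section QPochhammer

variable {q : ℝ}

lemma one_sub_one_div_pow_nonneg (hq : 1 ≤ q) (k : ℕ) : 0 ≤ 1 - 1 / q ^ k := by
  rw [sub_nonneg, div_le_one (by positivity)]
  exact one_le_pow₀ hq

lemma one_sub_one_div_pow_le_one (hq : 0 ≤ q) (k : ℕ) : 1 - 1 / q ^ k ≤ 1 := by
  have : 0 ≤ 1 / q ^ k := by positivity
  linarith

lemma one_sub_one_div_pow_pos (hq : 1 < q) {k : ℕ} (hk : k ≠ 0) : 0 < 1 - 1 / q ^ k := by
  rw [sub_pos, div_lt_one (by positivity)]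
  exact one_lt_pow₀ hq hk

lemma one_sub_one_div_pos (hq : 1 < q) : 0 < 1 - 1 / q := by
  simpa using one_sub_one_div_pow_pos hq one_ne_zero

lemma qPoch_pos (hq : 1 < q) (m : ℕ) : 0 < qPoch q m :=
  prod_pos fun k hk => one_sub_one_div_pow_pos hq (by simp at hk; omega)

lemma qPoch_le_one (hq : 1 ≤ q) (m : ℕ) : qPoch q m ≤ 1 :=
  prod_le_one (fun k _ => one_sub_one_div_pow_nonneg hq k)
    fun k _ => one_sub_one_div_pow_le_one (by linarith) k

lemma qPoch_le_one_sub_one_div (hq : 1 ≤ q) {m : ℕ} (hm : 1 ≤ m) :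
    qPoch q m ≤ 1 - 1 / q := by
  rw [qPoch, ← insert_Icc_add_one_left_eq_Icc hm, prod_insert (by simp), pow_one]
  refine mul_le_of_le_one_right (by simpa using one_sub_one_div_pow_nonneg hq 1) ?_
  exact prod_le_one (fun k _ => one_sub_one_div_pow_nonneg hq k)
    fun k _ => one_sub_one_div_pow_le_one (by linarith) k

lemma one_sub_one_div_sq_le_qPoch (hq : 2 ≤ q) (m : ℕ) : (1 - 1 / q) ^ 2 ≤ qPoch q m := by
  have h := one_sub_sq_le_prod_one_sub_pow (x := 1 / q) (by positivity)
    (one_div_le_one_div_of_le two_pos hq) m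
  simpa only [qPoch, one_div_pow] using h

end QPochhammer

lemma filter_Icc_le_eq_Icc {c N : ℕ} (h : c ≤ N) : {i ∈ Icc 1 N | i ≤ c} = Icc 1 c := by
  ext i
  simp only [mem_filter, mem_Icc]
  omega

lemma sum_Icc_countP_le_eq_sum (s : Multiset ℕ) {N : ℕ} (hs : ∀ p ∈ s, p ≤ N) :
    ∑ j ∈ Icc 1 N, s.countP (j ≤ ·) = s.sum := by
  induction s using Multiset.induction_on with
  | empty => simp
  | cons a s ih =>
    have ha : a ≤ N := hs a (Multiset.mem_cons_self a s)
    simp only [Multiset.countP_cons, sum_add_distrib, Multiset.sum_cons,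
      ih fun p hp => hs p (Multiset.mem_cons_of_mem hp), sum_boole, Nat.cast_id,
      filter_Icc_le_eq_Icc ha, Nat.card_Icc]
    omega

lemma sum_Icc_two_mul_sub_one (a : ℕ) : ∑ i ∈ Icc 1 a, (2 * i - 1) = a ^ 2 := by
  induction a with
  | zero => simp
  | succ a ih =>
    rw [sum_Icc_succ_top (by omega), ih]
    ring_nf
    omega

section Partition

variable {n : ℕ} (l : n.Partition)

lemma card_parts_le : Multiset.card l.parts ≤ n := by
  simpa [l.parts_sum] using Multiset.card_nsmul_le_sum fun _ hp => l.parts_pos hp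

lemma conjPart_le (j : ℕ) : conjPart l j ≤ n :=
  (Multiset.countP_le_card _ _).trans (card_parts_le l)

lemma conjPart_antitone : Antitone (conjPart l) := fun _ _ h => by
  simp only [conjPart, Multiset.countP_eq_card_filter]
  exact Multiset.card_le_card (Multiset.monotone_filter_right _ fun p hp => h.trans hp)

lemma rowLen_le (i : ℕ) : rowLen l i ≤ n :=
  (card_filter_le _ _).trans (by simp)

lemma rowLen_antitone : Antitone (rowLen l) := fun _ _ h =>
  card_le_card (monotone_filter_right _ fun _ _ hj => h.trans hj)

lemma le_conjPart_of_le_rowLen {i j : ℕ} (hj : 1 ≤ j) (h : j ≤ rowLen l i) :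
    i ≤ conjPart l j := by
  by_contra! hlt
  have hsub : {j' ∈ Icc 1 n | i ≤ conjPart l j'} ⊆ Ico 1 j := fun j' hj' => by
    simp only [mem_filter, mem_Icc] at hj'
    simp only [mem_Ico]
    refine ⟨hj'.1.1, lt_of_not_ge fun hge => ?_⟩
    exact absurd (hj'.2.trans (conjPart_antitone l hge)) (by omega)
  have := card_le_card hsub
  simp only [Nat.card_Ico] at this
  unfold rowLen at h
  omega

lemma sum_conjPart : ∑ j ∈ Icc 1 n, conjPart l j = n := by
  have := sum_Icc_countP_le_eq_sum l.parts fun _ hp => Nat.Partition.le_of_mem_parts hp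
  rwa [l.parts_sum] at this

lemma sum_rowLen : ∑ i ∈ Icc 1 n, rowLen l i = n := by
  simp only [rowLen, card_filter]
  rw [sum_comm]
  refine (sum_congr rfl fun j _ => ?_).trans (sum_conjPart l)
  rw [← card_filter, filter_Icc_le_eq_Icc (conjPart_le l j), Nat.card_Icc, Nat.add_sub_cancel]

lemma sum_conjPart_sq : ∑ j ∈ Icc 1 n, conjPart l j ^ 2 = n + 2 * nStat l := by
  have hsq : ∀ j ∈ Icc 1 n, conjPart l j ^ 2
      = ∑ i ∈ Icc 1 n, if i ≤ conjPart l j then 2 * i - 1 else 0 := fun j _ => by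
    rw [← sum_filter, filter_Icc_le_eq_Icc (conjPart_le l j), sum_Icc_two_mul_sub_one]
  have hrow : ∀ i ∈ Icc 1 n, (∑ j ∈ Icc 1 n, if i ≤ conjPart l j then 2 * i - 1 else 0)
      = 2 * ((i - 1) * rowLen l i) + rowLen l i := fun i hi => by
    rw [← sum_filter, sum_const, smul_eq_mul, ← rowLen]
    have : 1 ≤ i := (mem_Icc.1 hi).1
    rw [show 2 * i - 1 = 2 * (i - 1) + 1 by omega]
    ring
  rw [sum_congr rfl hsq, sum_comm, sum_congr rfl hrow, sum_add_distrib, sum_rowLen, ← mul_sum,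
    nStat, add_comm]

lemma mem_cells {s : ℕ × ℕ} :
    s ∈ cells l ↔ s.1 ∈ Icc 1 n ∧ s.2 ∈ Icc 1 n ∧ s.2 ≤ rowLen l s.1 := by
  simp [cells, and_assoc]

lemma le_conjPart_of_mem_cells {s : ℕ × ℕ} (hs : s ∈ cells l) : s.1 ≤ conjPart l s.2 := by
  obtain ⟨-, hs2, hrow⟩ := (mem_cells l).1 hs
  exact le_conjPart_of_le_rowLen l (mem_Icc.1 hs2).1 hrow

lemma hookLen_mem_Icc (s : ℕ × ℕ) : hookLen l s ∈ Icc 1 (2 * n + 1) := by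
  have := rowLen_le l s.1
  have := conjPart_le l s.2
  simp only [mem_Icc, hookLen, arm, leg]
  omega

lemma hookLen_lt_of_le {s t : ℕ × ℕ} (ht : t ∈ cells l)
    (h1 : s.1 ≤ t.1) (h2 : s.2 ≤ t.2) (hne : s ≠ t) : hookLen l t < hookLen l s := by
  have hrow := ((mem_cells l).1 ht).2.2
  have hcol := le_conjPart_of_mem_cells l ht
  have := rowLen_antitone l h1
  have := conjPart_antitone l h2
  have : s.1 < t.1 ∨ s.2 < t.2 := by
    by_contra! h
    exact hne (Prod.ext (le_antisymm h1 h.1) (le_antisymm h2 h.2))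
  simp only [hookLen, arm, leg]
  omega

lemma eq_of_hookLen_eq {s t : ℕ × ℕ} (hs : s ∈ cells l) (ht : t ∈ cells l)
    (hst : hookLen l s = hookLen l t) (h : s.1 = t.1 ∨ s.2 = t.2) : s = t := by
  by_contra hne
  have : s.1 ≤ t.1 ∧ s.2 ≤ t.2 ∨ t.1 ≤ s.1 ∧ t.2 ≤ s.2 := by omega
  rcases this with ⟨h1, h2⟩ | ⟨h1, h2⟩
  · exact (hookLen_lt_of_le l ht h1 h2 hne).ne' hst
  · exact (hookLen_lt_of_le l hs h1 h2 (Ne.symm hne)).ne hst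

lemma sum_snd_le_of_injOn_fst {S : Finset (ℕ × ℕ)} (hS : S ⊆ cells l)
    (hinj : Set.InjOn Prod.fst (S : Set (ℕ × ℕ))) : ∑ s ∈ S, s.2 ≤ n := calc
  ∑ s ∈ S, s.2 ≤ ∑ s ∈ S, rowLen l s.1 :=
    sum_le_sum fun _ hs => ((mem_cells l).1 (hS hs)).2.2
  _ = ∑ i ∈ S.image Prod.fst, rowLen l i := (sum_image hinj).symm
  _ ≤ ∑ i ∈ Icc 1 n, rowLen l i :=
    sum_le_sum_of_subset (image_subset_iff.2 fun _ hs => ((mem_cells l).1 (hS hs)).1)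
  _ = n := sum_rowLen l

end Partition

lemma card_mul_card_add_one_le_two_mul_sum (T : Finset ℕ) (hT : ∀ t ∈ T, 1 ≤ t) :
    #T * (#T + 1) ≤ 2 * ∑ t ∈ T, t := by
  induction T using Finset.induction_on_max with
  | empty => simp
  | insert a T hlt ih =>
    have ha : a ∉ T := fun h => (hlt a h).false
    have hcard : #T + 1 ≤ a := by
      have hsub : T ⊆ Ico 1 a := fun t ht => mem_Ico.2 ⟨hT t (mem_insert_of_mem ht), hlt t ht⟩
      have hle := card_le_card hsub
      rw [Nat.card_Ico] at hle
      have := hT a (mem_insert_self a T)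
      omega
    rw [card_insert_of_notMem ha, sum_insert ha]
    nlinarith [ih fun t ht => hT t (mem_insert_of_mem ht)]

lemma le_sqrt_two_mul_sub_of_mul_succ_le {r n : ℕ} (hn : 1 ≤ n) (h : r * (r + 1) ≤ 2 * n) :
    (r : ℝ) ≤ √(2 * n) - 1 / 4 := by
  have hsq : √(2 * n) ^ 2 = 2 * n := Real.sq_sqrt (by positivity)
  have hone : 1 ≤ √(2 * n) := Real.one_le_sqrt.2 (by norm_cast; omega)
  have h' : (r : ℝ) * (r + 1) ≤ 2 * n := by exact_mod_cast h
  nlinarith [(Nat.cast_nonneg r : (0 : ℝ) ≤ r)]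

section HookFibers

variable {n : ℕ} (l : n.Partition)

lemma card_hookLen_fiber_mul_succ_le (h : ℕ) :
    #{s ∈ cells l | hookLen l s = h} * (#{s ∈ cells l | hookLen l s = h} + 1) ≤ 2 * n := by
  set S := {s ∈ cells l | hookLen l s = h}
  have hmem : ∀ s ∈ S, s ∈ cells l ∧ hookLen l s = h := fun s hs => mem_filter.1 hs
  have heq : ∀ s ∈ S, ∀ t ∈ S, s.1 = t.1 ∨ s.2 = t.2 → s = t := fun s hs t ht =>
    eq_of_hookLen_eq l (hmem s hs).1 (hmem t ht).1 ((hmem s hs).2.trans (hmem t ht).2.symm)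
  have hsum := sum_snd_le_of_injOn_fst l (S := S) (filter_subset _ _)
    fun s hs t ht e => heq s hs t ht (Or.inl e)
  have hsnd : Set.InjOn Prod.snd (S : Set (ℕ × ℕ)) := fun s hs t ht e =>
    heq s hs t ht (Or.inr e)
  have hbound := card_mul_card_add_one_le_two_mul_sum (S.image Prod.snd)
    fun j hj => by
      obtain ⟨s, hs, rfl⟩ := mem_image.1 hj
      exact (mem_Icc.1 ((mem_cells l).1 (hmem s hs).1).2.1).1
  rw [card_image_of_injOn hsnd, sum_image hsnd] at hbound
  omega

lemma one_sub_one_div_rpow_le_prod_hookLen_sq {q : ℝ} (hq : 2 ≤ q) (hn : 1 ≤ n) :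
    (1 - 1 / q) ^ (4 * √(2 * n) - 1) ≤ (∏ s ∈ cells l, (1 - 1 / q ^ hookLen l s)) ^ 2 := by
  have hx := one_sub_one_div_pos (by linarith : 1 < q)
  have hx1 : 1 - 1 / q ≤ 1 := by simpa using one_sub_one_div_pow_le_one (by linarith : 0 ≤ q) 1
  set K := ⌊√(2 * n) - 1 / 4⌋₊
  have hK : (K : ℝ) ≤ √(2 * n) - 1 / 4 :=
    Nat.floor_le (by linarith [Real.one_le_sqrt.2 (by norm_cast; omega : (1 : ℝ) ≤ 2 * n)])
  have hfiber : ∀ h ∈ Icc 1 (2 * n + 1), #{s ∈ cells l | hookLen l s = h} ≤ K := fun h _ =>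
    Nat.le_floor (le_sqrt_two_mul_sub_of_mul_succ_le hn (card_hookLen_fiber_mul_succ_le l h))
  have hprod : (1 - 1 / q) ^ (2 * K) ≤ ∏ s ∈ cells l, (1 - 1 / q ^ hookLen l s) := by
    rw [pow_mul]
    exact (pow_le_pow_left₀ (by positivity) (one_sub_one_div_sq_le_qPoch hq (2 * n + 1)) K).trans
      (pow_prod_le_prod_comp_of_card_fiber_le (fun s _ => hookLen_mem_Icc l s)
        (fun k _ => one_sub_one_div_pow_nonneg (by linarith) k)
        (fun k _ => one_sub_one_div_pow_le_one (by linarith) k) hfiber)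
  calc (1 - 1 / q) ^ (4 * √(2 * n) - 1) ≤ (1 - 1 / q) ^ ((2 * (2 * K) : ℕ) : ℝ) :=
        Real.rpow_le_rpow_of_exponent_ge hx hx1 (by push_cast; linarith)
    _ = ((1 - 1 / q) ^ (2 * K)) ^ 2 := by rw [Real.rpow_natCast, mul_comm, pow_mul]
    _ ≤ _ := pow_le_pow_left₀ (by positivity) hprod 2

end HookFibers

section ZCoeff

variable {q : ℝ} {n : ℕ}

/-- `f (i, j)` is the power of `u / q ^ (i + 1 + j)` taken from the geometric series of the
factor `1 / (1 - u / q ^ (i + 1 + j))`. -/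
noncomputable def zWeight (q : ℝ) (f : (ℕ × ℕ) →₀ ℕ) : ℝ :=
  f.prod fun p k => (1 / q ^ ((p.1 + 1) + p.2)) ^ k

lemma zCoeff_eq_tsum :
    zCoeff n q = ∑' f : {f : (ℕ × ℕ) →₀ ℕ // (f.sum fun _ k => k) = n}, zWeight q f := rfl

lemma zWeight_add (f g : (ℕ × ℕ) →₀ ℕ) : zWeight q (f + g) = zWeight q f * zWeight q g :=
  Finsupp.prod_add_index' (fun _ => pow_zero _) fun _ _ _ => pow_add _ _ _

lemma zWeight_single (p : ℕ × ℕ) (k : ℕ) :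
    zWeight q (Finsupp.single p k) = (1 / q ^ ((p.1 + 1) + p.2)) ^ k :=
  Finsupp.prod_single_index (pow_zero _)

lemma zWeight_nonneg (hq : 0 ≤ q) (f : (ℕ × ℕ) →₀ ℕ) : 0 ≤ zWeight q f :=
  prod_nonneg fun _ _ => by positivity

/-- The three terms used: `u ^ n` from the factor `1 / (1 - u / q)`, and `u ^ (n - 1)` from it
times `u` from one of the two factors `1 / (1 - u / q ^ 2)`. -/
lemma one_div_pow_mul_le_zCoeff (hq : 0 < q) (hn : 1 ≤ n)
    (hs : Summable fun f : {f : (ℕ × ℕ) →₀ ℕ // (f.sum fun _ k => k) = n} => zWeight q f) :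
    (1 / q) ^ n * (1 + 2 / q) ≤ zCoeff n q := by
  classical
  let φ : ℕ × ℕ → {f : (ℕ × ℕ) →₀ ℕ // (f.sum fun _ k => k) = n} := fun p =>
    ⟨Finsupp.single (0, 0) (n - 1) + Finsupp.single p 1, by
      rw [Finsupp.sum_add_index' (fun _ => rfl) fun _ _ _ => rfl, Finsupp.sum_single_index rfl,
        Finsupp.sum_single_index rfl]
      omega⟩
  have hφ : Function.Injective φ := fun p p' h =>
    Finsupp.single_left_injective one_ne_zero (add_left_cancel (congrArg Subtype.val h))
  obtain ⟨m, rfl⟩ : ∃ m, n = m + 1 := ⟨n - 1, by omega⟩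
  calc (1 / q) ^ (m + 1) * (1 + 2 / q)
      = ∑ p ∈ {(0, 0), (0, 1), (1, 0)}, zWeight q (φ p) := by
        simp [φ, zWeight_add, zWeight_single]
        ring
    _ = ∑ f ∈ Finset.image φ {(0, 0), (0, 1), (1, 0)}, zWeight q f := by
        rw [sum_image fun _ _ _ _ h => hφ h]
    _ ≤ zCoeff (m + 1) q := hs.sum_le_tsum _ fun f _ => zWeight_nonneg hq.le f

lemma one_div_zCoeff_le (hq : 2 ≤ q) (hn : 1 ≤ n) : 1 / zCoeff n q ≤ q ^ n * (1 - 1 / q) := by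
  have hq0 : 0 < q := by linarith
  have hx : 1 / q ≤ 1 / 2 := one_div_le_one_div_of_le two_pos hq
  have hx0 : 0 ≤ 1 - 1 / q := by linarith
  by_cases hs : Summable
    fun f : {f : (ℕ × ℕ) →₀ ℕ // (f.sum fun _ k => k) = n} => zWeight q f
  · have hz := one_div_pow_mul_le_zCoeff hq0 hn hs
    rw [div_le_iff₀ (lt_of_lt_of_le (by positivity) hz)]
    calc (1 : ℝ) ≤ (q * (1 / q)) ^ n * ((1 - 1 / q) * (1 + 2 * (1 / q))) := by
          rw [mul_one_div_cancel hq0.ne', one_pow, one_mul]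
          nlinarith [one_div_pos.2 hq0]
      _ = q ^ n * (1 - 1 / q) * ((1 / q) ^ n * (1 + 2 / q)) := by ring
      _ ≤ q ^ n * (1 - 1 / q) * zCoeff n q := mul_le_mul_of_nonneg_left hz (by positivity)
  · rw [zCoeff_eq_tsum, tsum_eq_zero_of_not_summable hs, div_zero]
    positivity

end ZCoeff

section Measures

variable {q : ℝ} {n : ℕ} (l : n.Partition)

lemma Pden_eq : Pden q l = q ^ (n + 2 * nStat l) * ∏ j ∈ Icc 1 n, qPoch q (mult l j) := by
  rw [Pden, prod_mul_distrib, prod_pow_eq_pow_sum, sum_conjPart_sq]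

lemma prod_qPoch_mult_le (hq : 1 < q) (hn : 1 ≤ n) :
    ∏ j ∈ Icc 1 n, qPoch q (mult l j) ≤ 1 - 1 / q := by
  obtain ⟨p, hp⟩ : ∃ p, p ∈ l.parts := Multiset.exists_mem_of_ne_zero fun h0 => by
    have := l.parts_sum
    rw [h0, Multiset.sum_zero] at this
    omega
  have hpmem : p ∈ Icc 1 n := mem_Icc.2 ⟨l.parts_pos hp, Nat.Partition.le_of_mem_parts hp⟩
  rw [← mul_prod_erase _ _ hpmem]
  refine (mul_le_of_le_one_right (qPoch_pos hq _).le ?_).trans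
    (qPoch_le_one_sub_one_div hq.le (Multiset.count_pos.2 hp))
  exact prod_le_one (fun j _ => (qPoch_pos hq _).le) fun j _ => qPoch_le_one hq.le _

lemma div_le_Pmeas (hq : 2 ≤ q) (hn : 1 ≤ n) :
    q ^ n * (1 - 1 / q) / q ^ (n + 2 * nStat l) ≤ Pmeas q l := by
  have hq1 : 1 < q := by linarith
  have hx := one_sub_one_div_pos hq1
  have hA := prod_qPoch_mult_le l hq1 hn
  have hA0 : 0 < ∏ j ∈ Icc 1 n, qPoch q (mult l j) := prod_pos fun j _ => qPoch_pos hq1 _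
  rw [Pmeas, Pden_eq, ← div_div, mul_div_right_comm, mul_div_right_comm _ (qPoch q n)]
  calc q ^ n / q ^ (n + 2 * nStat l) * (1 - 1 / q)
      = q ^ n / q ^ (n + 2 * nStat l) * ((1 - 1 / q) ^ 2 / (1 - 1 / q)) := by
        rw [sq, mul_div_cancel_right₀ _ hx.ne']
    _ ≤ q ^ n / q ^ (n + 2 * nStat l) * (qPoch q n / ∏ j ∈ Icc 1 n, qPoch q (mult l j)) := by
        gcongr
        exacts [(qPoch_pos hq1 n).le, one_sub_one_div_sq_le_qPoch hq n]
    _ = _ := by ring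

lemma Qmeas_le (hq : 2 ≤ q) (hn : 1 ≤ n) :
    Qmeas q l ≤ q ^ n * (1 - 1 / q) / q ^ (n + 2 * nStat l) *
      (1 / (∏ s ∈ cells l, (1 - 1 / q ^ hookLen l s)) ^ 2) := by
  have hq0 : 0 < q := by linarith
  calc Qmeas q l = 1 / zCoeff n q *
        (1 / (q ^ (n + 2 * nStat l) * (∏ s ∈ cells l, (1 - 1 / q ^ hookLen l s)) ^ 2)) := by
        rw [Qmeas, prod_pow]
    _ ≤ q ^ n * (1 - 1 / q) *
        (1 / (q ^ (n + 2 * nStat l) * (∏ s ∈ cells l, (1 - 1 / q ^ hookLen l s)) ^ 2)) :=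
        mul_le_mul_of_nonneg_right (one_div_zCoeff_le hq hn) (by positivity)
    _ = _ := by ring

end Measures

theorem stmt15 (q : ℝ) (hq : 2 ≤ q) (n : ℕ) (hn : 1 ≤ n) (l : n.Partition) :
    Qmeas q l ≤ (1 - 1/q) ^ ((1 : ℝ) - 4 * Real.sqrt (2 * n)) * Pmeas q l := by
  have hx := one_sub_one_div_pos (by linarith : 1 < q)
  have hhook : 1 / (∏ s ∈ cells l, (1 - 1 / q ^ hookLen l s)) ^ 2
      ≤ (1 - 1 / q) ^ ((1 : ℝ) - 4 * √(2 * n)) := by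
    rw [show (1 : ℝ) - 4 * √(2 * n) = -(4 * √(2 * n) - 1) by ring, Real.rpow_neg hx.le, one_div]
    exact inv_anti₀ (by positivity) (one_sub_one_div_rpow_le_prod_hookLen_sq l hq hn)
  calc Qmeas q l ≤ q ^ n * (1 - 1 / q) / q ^ (n + 2 * nStat l) *
        (1 / (∏ s ∈ cells l, (1 - 1 / q ^ hookLen l s)) ^ 2) := Qmeas_le l hq hn
    _ ≤ Pmeas q l * (1 - 1 / q) ^ ((1 : ℝ) - 4 * √(2 * n)) :=
        mul_le_mul (div_le_Pmeas l hq hn) hhook (by positivity)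
          ((by positivity : (0 : ℝ) ≤ _).trans (div_le_Pmeas l hq hn))
    _ = _ := mul_comm _ _
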